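/- arXiv:2601.09311 — 4 statements merged into one kernel-verified Lean document; each statement's English description precedes it below -/
import Mathlib

section
/- Let X and Y be Polish spaces with their Borel σ-algebras, and let (γ_n)_{n≥1} be a sequence of Borel probability measures on X × Y all having the same first marginal μ on X. Then there exist Borel measurable maps ξ : (0,1) → X and, for each n ≥ 1, ξ_n : (0,1) → Y, such that for every n the pushforward of Lebesgue measure on (0,1) under the map u ↦ (ξ(u), ξ_n(u)) equals γ_n. In particular, the map ξ realizing the common first marginal can be chosen independently of n. -/
/-!
Disintegrate `γ n = μ ⊗ₘ κₙ`. A single uniform variable on `(0,1)` carries two independent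
uniform coordinates `(v, w)`; realize `μ` as the law of `f v` and each `κₙ x` as the law of
`gₙ x w` with `gₙ` jointly measurable (Kallenberg's kernel representation). Then
`u ↦ (f v, gₙ (f v) w)` has law `μ ⊗ₘ κₙ`, and its first coordinate does not depend on `n`.
-/

open MeasureTheory ProbabilityTheory Set Function unitInterval

namespace MeasureTheory.Measure

theorem map_projIcc_volume_restrict_Ioo :
    (volume.restrict (Ioo (0 : ℝ) 1)).map (projIcc 0 1 zero_le_one) = (volume : Measure I) := by
  have hproj : Measurable (projIcc (0 : ℝ) 1 zero_le_one) := continuous_projIcc.measurable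
  calc (volume.restrict (Ioo (0 : ℝ) 1)).map (projIcc 0 1 zero_le_one)
      = ((volume : Measure I).map Subtype.val).map (projIcc 0 1 zero_le_one) := by
        rw [measurePreserving_coe.map_eq, restrict_congr_set Ioo_ae_eq_Icc]
    _ = volume := by
        rw [map_map hproj measurable_subtype_coe]
        simp [comp_def, projIcc_val]

theorem exists_measurable_map_volume_restrict_Ioo_eq {Z : Type*} [MeasurableSpace Z]
    [StandardBorelSpace Z] [Nonempty Z] (ν : Measure Z) [IsProbabilityMeasure ν] :
    ∃ f : ℝ → Z, Measurable f ∧ (volume.restrict (Ioo (0 : ℝ) 1)).map f = ν := by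
  obtain ⟨f, hf, hfν⟩ := ν.exists_measurable_map_eq
  have hproj : Measurable (projIcc (0 : ℝ) 1 zero_le_one) := continuous_projIcc.measurable
  refine ⟨f ∘ projIcc 0 1 zero_le_one, hf.comp hproj, ?_⟩
  rw [← map_map hf hproj, map_projIcc_volume_restrict_Ioo, hfν]

theorem map_prod_eq_compProd {A B Z : Type*} [MeasurableSpace A] [MeasurableSpace B]
    [MeasurableSpace Z] (μ : Measure A) [SFinite μ] (ν : Measure B) [SFinite ν]
    (κ : Kernel A Z) [IsSFiniteKernel κ] {g : A → B → Z} (hg : Measurable (uncurry g))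
    (hgκ : ∀ a, ν.map (g a) = κ a) :
    (μ.prod ν).map (fun p => (p.1, g p.1 p.2)) = μ ⊗ₘ κ := by
  have hmeas : Measurable (fun p : A × B => (p.1, g p.1 p.2)) := measurable_fst.prodMk hg
  ext s hs
  rw [map_apply hmeas hs, prod_apply (hmeas hs), compProd_apply hs]
  refine lintegral_congr fun a => ?_
  rw [← hgκ a, map_apply hg.of_uncurry_left (measurable_prodMk_left hs)]
  rfl

end MeasureTheory.Measure

theorem exists_measurable_map_volume_restrict_Ioo_eq_compProd {ι X Y : Type*}
    [MeasurableSpace X] [StandardBorelSpace X] [Nonempty X]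
    [MeasurableSpace Y] [StandardBorelSpace Y] [Nonempty Y]
    (μ : Measure X) [IsProbabilityMeasure μ] (κ : ι → Kernel X Y) [∀ i, IsMarkovKernel (κ i)] :
    ∃ (ξ : ℝ → X) (ξi : ι → ℝ → Y), Measurable ξ ∧ (∀ i, Measurable (ξi i)) ∧
      ∀ i, (volume.restrict (Ioo (0 : ℝ) 1)).map (fun u => (ξ u, ξi i u)) = μ ⊗ₘ κ i := by
  obtain ⟨s, hs, hsvol⟩ :=
    Measure.exists_measurable_map_volume_restrict_Ioo_eq (volume : Measure (I × I))
  obtain ⟨f, hf, hfμ⟩ := μ.exists_measurable_map_eq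
  choose g hg hgκ using fun i => (κ i).exists_measurable_map_eq_unitInterval
  refine ⟨fun u => f (s u).1, fun i u => g i (f (s u).1) (s u).2,
    hf.comp (measurable_fst.comp hs),
    fun i => (hg i).comp ((hf.comp (measurable_fst.comp hs)).prodMk (measurable_snd.comp hs)),
    fun i => ?_⟩
  have hΦ : Measurable (fun p : X × I => (p.1, g i p.1 p.2)) := measurable_fst.prodMk (hg i)
  calc (volume.restrict (Ioo (0 : ℝ) 1)).map (fun u => (f (s u).1, g i (f (s u).1) (s u).2))
      = ((volume : Measure (I × I)).map (Prod.map f id)).map (fun p => (p.1, g i p.1 p.2)) := by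
        rw [← hsvol, Measure.map_map (hf.prodMap measurable_id) hs,
          Measure.map_map hΦ ((hf.prodMap measurable_id).comp hs)]
        rfl
    _ = μ ⊗ₘ κ i := by
        rw [Measure.volume_eq_prod, ← Measure.map_prod_map _ _ hf measurable_id, hfμ,
          Measure.map_id,
          Measure.map_prod_eq_compProd μ volume (κ i) (hg i) (hgκ i)]

/-- Let `X` and `Y` be Polish spaces with their Borel σ-algebras, and let
`(γ_n)` be a sequence of Borel probability measures on `X × Y` all having the same first
marginal `μ` on `X`. Then there exist Borel measurable maps `ξ : (0,1) → X` and, for each `n`,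
`ξ_n : (0,1) → Y`, such that for every `n` the pushforward of Lebesgue measure on `(0,1)`
under `u ↦ (ξ u, ξ_n u)` equals `γ_n`. -/
theorem stmt0
    {X Y : Type*} [TopologicalSpace X] [PolishSpace X] [MeasurableSpace X] [BorelSpace X]
    [TopologicalSpace Y] [PolishSpace Y] [MeasurableSpace Y] [BorelSpace Y]
    (γ : ℕ → Measure (X × Y)) (hγ : ∀ n, IsProbabilityMeasure (γ n))
    (μ : Measure X) (hmarg : ∀ n, (γ n).map Prod.fst = μ) :
    ∃ (ξ : ℝ → X) (ξn : ℕ → ℝ → Y), Measurable ξ ∧ (∀ n, Measurable (ξn n)) ∧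
      ∀ n, Measure.map (fun u => (ξ u, ξn n u)) (volume.restrict (Set.Ioo (0:ℝ) 1)) = γ n := by
  obtain ⟨x, y⟩ : Nonempty (X × Y) := nonempty_of_isProbabilityMeasure (γ 0)
  have : Nonempty X := ⟨x⟩
  have : Nonempty Y := ⟨y⟩
  have : IsProbabilityMeasure μ :=
    hmarg 0 ▸ Measure.isProbabilityMeasure_map measurable_fst.aemeasurable
  have hγ_eq : ∀ n, μ ⊗ₘ (γ n).condKernel = γ n := fun n => by
    rw [← hmarg n]; exact (γ n).disintegrate _
  obtain ⟨ξ, ξn, hξ, hξn, hmap⟩ :=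
    exists_measurable_map_volume_restrict_Ioo_eq_compProd μ (fun n => (γ n).condKernel)
  exact ⟨ξ, ξn, hξ, hξn, fun n => (hmap n).trans (hγ_eq n)⟩
end

section
/- Let N ≥ 1 and let t < T be real numbers. Let A : [t,T] → ℝ^{N×N} be a continuous matrix-valued function whose off-diagonal entries are nonnegative, i.e. A_{ij}(s) ≥ 0 for all i ≠ j and all s ∈ [t,T]. Suppose x : [t,T] → ℝ^N is differentiable with x'(s) = A(s) x(s) for all s ∈ [t,T], and x(t) ∈ ℝ^N_+. Then x(s) ∈ ℝ^N_+ for every s ∈ [t,T]. -/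
/-!
The squared distance `g s = ∑ i, min (x s i) 0 ^ 2` from `x s` to the orthant is differentiable,
with `g' = 2 ∑ i, min (x s i) 0 * (A s *ᵥ x s) i`. Because the off-diagonal entries of `A` are
nonnegative, replacing `x s j` by its negative part `min (x s j) 0` can only increase each term,
which gives `g' ≤ 2 N C g` with `C` a bound for the entries of `A` on `[t, T]`. Since `g t = 0`,
Grönwall's inequality forces `g = 0` on `[t, T]`.
-/

open Set Matrix Filter Asymptotics Topology

lemma hasDerivAt_min_zero_sq (u : ℝ) :
    HasDerivAt (fun v : ℝ => min v 0 ^ 2) (2 * min u 0) u := by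
  rcases lt_trichotomy u 0 with hu | rfl | hu
  · have hloc : (fun v : ℝ => min v 0 ^ 2) =ᶠ[𝓝 u] fun v => v ^ 2 := by
      filter_upwards [Iio_mem_nhds hu] with v hv
      rw [min_eq_left (le_of_lt hv)]
    simpa [min_eq_left hu.le] using (hasDerivAt_pow 2 u).congr_of_eventuallyEq hloc
  · -- near `0`, `min v 0 ^ 2 ≤ v ^ 2 = o(v)`
    rw [hasDerivAt_iff_isLittleO_nhds_zero]
    simp only [zero_add, min_self, ne_eq, OfNat.ofNat_ne_zero, not_false_eq_true, zero_pow,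
      sub_zero, mul_zero, smul_zero]
    refine IsBigO.trans_isLittleO (IsBigO.of_bound 1 (Eventually.of_forall fun v => ?_))
      (isLittleO_pow_id one_lt_two)
    rw [one_mul, norm_pow, norm_pow]
    gcongr
    simp only [Real.norm_eq_abs]
    rcases le_total v 0 with h | h <;> simp [h]
  · have hloc : (fun v : ℝ => min v 0 ^ 2) =ᶠ[𝓝 u] fun _ => 0 := by
      filter_upwards [Ioi_mem_nhds hu] with v hv
      simp [min_eq_right (mem_Ioi.1 hv).le]
    simpa [min_eq_right hu.le] using (hasDerivAt_const u (0 : ℝ)).congr_of_eventuallyEq hloc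

/-- Off the diagonal, `min (v i) 0 ≤ 0`, `M i j ≥ 0` and `v j ≥ min (v j) 0`; on it, equality. -/
lemma min_zero_mul_mul_le {n : Type*} (M : Matrix n n ℝ) (hM : ∀ i j, i ≠ j → 0 ≤ M i j)
    (v : n → ℝ) (i j : n) : min (v i) 0 * (M i j * v j) ≤ M i j * (min (v i) 0 * min (v j) 0) := by
  rcases eq_or_ne i j with rfl | hij
  · have : min (v i) 0 * v i = min (v i) 0 * min (v i) 0 := by
      rcases le_total (v i) 0 with h | h <;> simp [h]
    rw [mul_left_comm, this]
  · rw [mul_left_comm]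
    exact mul_le_mul_of_nonneg_left
      (mul_le_mul_of_nonpos_left (min_le_left _ _) (min_le_right _ _)) (hM i j hij)

def sqDistOrthant {n : Type*} [Fintype n] (v : n → ℝ) : ℝ :=
  ∑ i, min (v i) 0 ^ 2

section Orthant

variable {n : Type*} [Fintype n]

lemma sqDistOrthant_nonneg (v : n → ℝ) : 0 ≤ sqDistOrthant v :=
  Finset.sum_nonneg fun _ _ => sq_nonneg _

lemma sqDistOrthant_eq_zero_iff (v : n → ℝ) : sqDistOrthant v = 0 ↔ ∀ i, 0 ≤ v i := by
  simp [sqDistOrthant, Finset.sum_eq_zero_iff_of_nonneg fun i _ => sq_nonneg (min (v i) 0)]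

lemma HasDerivWithinAt.sqDistOrthant {x : ℝ → n → ℝ} {x' : n → ℝ} {S : Set ℝ} {s : ℝ}
    (hx : HasDerivWithinAt x x' S s) :
    HasDerivWithinAt (fun r => sqDistOrthant (x r)) (2 * ∑ i, min (x s i) 0 * x' i) S s := by
  rw [Finset.mul_sum]
  refine HasDerivWithinAt.fun_sum fun i _ => ?_
  exact ((hasDerivAt_min_zero_sq (x s i)).comp_hasDerivWithinAt s
    (hasDerivWithinAt_pi.1 hx i)).congr_deriv (mul_assoc _ _ _)

lemma sum_min_zero_mul_mulVec_le (M : Matrix n n ℝ) (hM : ∀ i j, i ≠ j → 0 ≤ M i j) {C : ℝ}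
    (hC : ∀ i j, |M i j| ≤ C) (v : n → ℝ) :
    ∑ i, min (v i) 0 * (M *ᵥ v) i ≤ Fintype.card n * C * sqDistOrthant v := by
  set m := fun i => min (v i) 0
  have hterm : ∀ i j, M i j * (m i * m j) ≤ C * (m i ^ 2 + m j ^ 2) / 2 := fun i j => by
    have hamgm : |m i * m j| ≤ (m i ^ 2 + m j ^ 2) / 2 :=
      abs_le.2 ⟨by nlinarith [sq_nonneg (m i + m j)], by nlinarith [sq_nonneg (m i - m j)]⟩
    calc M i j * (m i * m j) ≤ |M i j| * |m i * m j| := (le_abs_self _).trans_eq (abs_mul _ _)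
      _ ≤ C * ((m i ^ 2 + m j ^ 2) / 2) :=
          mul_le_mul (hC i j) hamgm (abs_nonneg _) ((abs_nonneg _).trans (hC i j))
      _ = C * (m i ^ 2 + m j ^ 2) / 2 := by ring
  calc ∑ i, m i * (M *ᵥ v) i = ∑ i, ∑ j, m i * (M i j * v j) := by
        simp only [mulVec, dotProduct, Finset.mul_sum]
    _ ≤ ∑ i, ∑ j, M i j * (m i * m j) :=
        Finset.sum_le_sum fun i _ => Finset.sum_le_sum fun j _ => min_zero_mul_mul_le M hM v i j
    _ ≤ ∑ i, ∑ j, C * (m i ^ 2 + m j ^ 2) / 2 :=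
        Finset.sum_le_sum fun i _ => Finset.sum_le_sum fun j _ => hterm i j
    _ = Fintype.card n * C * sqDistOrthant v := by
        simp only [← Finset.sum_div, ← Finset.mul_sum, Finset.sum_add_distrib, Finset.sum_const,
          Finset.card_univ, nsmul_eq_mul, sqDistOrthant, m]
        ring

end Orthant

/-- Grönwall with zero initial value: `exp (-K s) * g s` is antitone. -/
lemma le_zero_of_hasDerivWithinAt_le_mul {g g' : ℝ → ℝ} {K a b : ℝ}
    (hg : ∀ s ∈ Icc a b, HasDerivWithinAt g (g' s) (Icc a b) s)
    (hbound : ∀ s ∈ Icc a b, g' s ≤ K * g s) (ha : g a ≤ 0) :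
    ∀ s ∈ Icc a b, g s ≤ 0 := by
  set h := fun s => Real.exp (-K * s) * g s
  have hh : ∀ s ∈ Icc a b,
      HasDerivWithinAt h (Real.exp (-K * s) * (g' s - K * g s)) (Icc a b) s := fun s hs => by
    refine (((hasDerivAt_id s).const_mul (-K)).exp.hasDerivWithinAt.fun_mul
      (hg s hs)).congr_deriv ?_
    simp only [id, mul_one]
    ring
  have hanti : AntitoneOn h (Icc a b) :=
    antitoneOn_of_hasDerivWithinAt_nonpos (convex_Icc a b)
      (fun s hs => (hh s hs).continuousWithinAt)
      (fun s hs => (hh s (interior_subset hs)).mono interior_subset)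
      (fun s hs => mul_nonpos_of_nonneg_of_nonpos (Real.exp_pos _).le
        (sub_nonpos.2 (hbound s (interior_subset hs))))
  intro s hs
  have hsa : h s ≤ h a := hanti ⟨le_rfl, hs.1.trans hs.2⟩ hs hs.1
  have : h a ≤ 0 := mul_nonpos_of_nonneg_of_nonpos (Real.exp_pos _).le ha
  exact nonpos_of_mul_nonpos_right (hsa.trans this) (Real.exp_pos _)

section EntryBound

attribute [local instance] Matrix.normedAddCommGroup

lemma exists_abs_apply_le_of_continuousOn {ι m n : Type*} [TopologicalSpace ι] [Fintype m]
    [Fintype n] {A : ι → Matrix m n ℝ} {K : Set ι} (hK : IsCompact K) (hA : ContinuousOn A K) :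
    ∃ C, ∀ s ∈ K, ∀ i j, |A s i j| ≤ C := by
  obtain ⟨C, hC⟩ := hK.exists_bound_of_continuousOn hA
  exact ⟨C, fun s hs i j => (norm_entry_le_entrywise_sup_norm (A s)).trans (hC s hs)⟩

end EntryBound

theorem stmt1_general {N : ℕ} {t T : ℝ}
    (A : ℝ → Matrix (Fin N) (Fin N) ℝ)
    (hAcont : ContinuousOn A (Icc t T))
    (hAoff : ∀ s ∈ Icc t T, ∀ i j : Fin N, i ≠ j → 0 ≤ A s i j)
    (x : ℝ → Fin N → ℝ)
    (hx : ∀ s ∈ Icc t T, HasDerivWithinAt x (A s *ᵥ x s) (Icc t T) s)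
    (hx0 : ∀ i, 0 ≤ x t i) :
    ∀ s ∈ Icc t T, ∀ i, 0 ≤ x s i := by
  obtain ⟨C, hC⟩ := exists_abs_apply_le_of_continuousOn isCompact_Icc hAcont
  have hdist : ∀ s ∈ Icc t T, sqDistOrthant (x s) ≤ 0 := by
    refine le_zero_of_hasDerivWithinAt_le_mul (K := 2 * (Fintype.card (Fin N) * C))
      (fun s hs => (hx s hs).sqDistOrthant) (fun s hs => ?_)
      ((sqDistOrthant_eq_zero_iff _).2 hx0).le
    linarith [sum_min_zero_mul_mulVec_le (A s) (hAoff s hs) (hC s hs) (x s)]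
  exact fun s hs =>
    (sqDistOrthant_eq_zero_iff _).1 (le_antisymm (hdist s hs) (sqDistOrthant_nonneg _))

/-- Invariance of the nonnegative orthant for linear ODE systems `x' = A(s) x`
whose matrix has nonnegative off-diagonal entries (the Nagumo-type invariance used for the
Zakai equation). -/
theorem stmt1 {N : ℕ} (hN : 1 ≤ N) {t T : ℝ} (htT : t < T)
    (A : ℝ → Matrix (Fin N) (Fin N) ℝ)
    (hAcont : ContinuousOn A (Icc t T))
    (hAoff : ∀ s ∈ Icc t T, ∀ i j : Fin N, i ≠ j → 0 ≤ A s i j)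
    (x : ℝ → Fin N → ℝ)
    (hx : ∀ s ∈ Icc t T, HasDerivWithinAt x (A s *ᵥ x s) (Icc t T) s)
    (hx0 : ∀ i, 0 ≤ x t i) :
    ∀ s ∈ Icc t T, ∀ i, 0 ≤ x s i :=
  stmt1_general A hAcont hAoff x hx hx0
end

section
/- Let d, k ≥ 1, m ≥ 0, let (A, d_A) be a Polish metric space with base point a_0, and let S be a finite set. Let F : ℝ^d × A × ℝ^k × S → ℝ^d be a function that is Lipschitz in its ℝ^k variable uniformly with respect to the other variables, with Lipschitz constant L_F, and let ψ_1, …, ψ_k : ℝ^d × A → ℝ be measurable with |ψ_j(y,a)| ≤ C (1 + |y| + d_A(a, a_0))^m for all j. For a probability measure ν on ℝ^d × A integrating all ψ_j, set h(y, ν, a, i) := F(y, a, ∫ψ_1 dν, …, ∫ψ_k dν, i). Let r ≥ 2m. Then there exists L ≥ 0, depending only on L_F, C, k, m, such that for every ρ ∈ P_r(ℝ^d × A) and all probability measures ν_1, ν_2 absolutely continuous with respect to ρ with respective densities φ_1, φ_2 ∈ L²(ρ), one has |h(y, ν_1, a, i) − h(y, ν_2, a, i)| ≤ L (∫ |φ_1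 − φ_2|² dρ)^{1/2} (1 + ‖ρ‖_{W_r}^m) for all y ∈ ℝ^d, a ∈ A, i ∈ S. -/
/-!
Writing `∫ ψ_j dν_ℓ = ∫ φ_ℓ ψ_j dρ`, Cauchy–Schwarz bounds each difference
`|∫ ψ_j dν₁ - ∫ ψ_j dν₂|` by `‖φ₁ - φ₂‖_{L²(ρ)} ‖ψ_j‖_{L²(ρ)}`. The growth bound gives
`ψ_j² ≤ C² 4^m (1 + t^{2m})` with `t = ‖y‖ + d(a, a₀)`, and Jensen's inequality for the map
`x ↦ x^{2m/r}`, concave because `2m ≤ r`, turns `∫ t^{2m} dρ` into `‖ρ‖_{W_r}^{2m}`, so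
`‖ψ_j‖_{L²(ρ)} ≤ C 2^m (1 + ‖ρ‖_{W_r}^m)`. The Lipschitz bound on `F` then gives the claim with
`L = L_F √k C 2^m`.
-/

open MeasureTheory

lemma Real.rpow_le_one_add_rpow {x p q : ℝ} (hx : 0 ≤ x) (hp : 0 ≤ p) (hpq : p ≤ q) :
    x ^ p ≤ 1 + x ^ q := by
  rcases le_or_gt x 1 with hx1 | hx1
  · linarith [Real.rpow_le_one hx hx1 hp, Real.rpow_nonneg hx q]
  · linarith [Real.rpow_le_rpow_of_exponent_le hx1.le hpq]

lemma Real.rpow_rpow_div_self {x : ℝ} (hx : 0 ≤ x) {r : ℝ} (hr : r ≠ 0) (p : ℝ) :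
    (x ^ r) ^ (p / r) = x ^ p := by
  rw [← Real.rpow_mul hx, mul_div_cancel₀ p hr]

lemma Real.rpow_two_mul {x : ℝ} (hx : 0 ≤ x) (m : ℝ) : x ^ (2 * m) = (x ^ m) ^ 2 := by
  rw [mul_comm, Real.rpow_mul hx, Real.rpow_two]

lemma Real.one_add_rpow_le {x p : ℝ} (hx : 0 ≤ x) (hp : 0 ≤ p) :
    (1 + x) ^ p ≤ 2 ^ p * (1 + x ^ p) := by
  rcases le_total x 1 with hx1 | hx1
  · calc (1 + x) ^ p ≤ 2 ^ p := Real.rpow_le_rpow (by positivity) (by linarith) hp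
      _ ≤ 2 ^ p * (1 + x ^ p) :=
        le_mul_of_one_le_right (by positivity) (by linarith [Real.rpow_nonneg hx p])
  · calc (1 + x) ^ p ≤ (2 * x) ^ p := Real.rpow_le_rpow (by positivity) (by linarith) hp
      _ = 2 ^ p * x ^ p := Real.mul_rpow zero_le_two hx
      _ ≤ 2 ^ p * (1 + x ^ p) := by gcongr; linarith

lemma sq_le_of_abs_le_mul_one_add_rpow {a C x m : ℝ} (hx : 0 ≤ x) (hm : 0 ≤ m)
    (ha : |a| ≤ C * (1 + x) ^ m) : a ^ 2 ≤ C ^ 2 * 2 ^ (2 * m) * (1 + x ^ (2 * m)) := by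
  calc a ^ 2 ≤ (C * (1 + x) ^ m) ^ 2 := sq_le_sq' (abs_le.1 ha).1 (abs_le.1 ha).2
    _ = C ^ 2 * (1 + x) ^ (2 * m) := by rw [mul_pow, Real.rpow_two_mul (by positivity)]
    _ ≤ C ^ 2 * (2 ^ (2 * m) * (1 + x ^ (2 * m))) := by
      gcongr; exact Real.one_add_rpow_le hx (by positivity)
    _ = C ^ 2 * 2 ^ (2 * m) * (1 + x ^ (2 * m)) := by ring

lemma Real.sqrt_sum_sq_le_of_abs_le {ι : Type*} [Fintype ι] {x : ι → ℝ} {b : ℝ} (hb : 0 ≤ b)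
    (hx : ∀ i, |x i| ≤ b) : √(∑ i, x i ^ 2) ≤ √(Fintype.card ι) * b := by
  rw [← Real.sqrt_sq hb, ← Real.sqrt_mul (Nat.cast_nonneg _)]
  refine Real.sqrt_le_sqrt ?_
  calc ∑ i, x i ^ 2 ≤ ∑ _i : ι, b ^ 2 :=
        Finset.sum_le_sum fun i _ => sq_le_sq' (abs_le.1 (hx i)).1 (abs_le.1 (hx i)).2
    _ = Fintype.card ι * b ^ 2 := by simp

section Moments

variable {α : Type*} [MeasurableSpace α] {μ : Measure α}

lemma MeasureTheory.Integrable.rpow_of_le_one [IsFiniteMeasure μ] {f : α → ℝ}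
    (hf : Integrable f μ) (hf0 : 0 ≤ᵐ[μ] f) {θ : ℝ} (hθ0 : 0 ≤ θ) (hθ1 : θ ≤ 1) :
    Integrable (fun x => f x ^ θ) μ := by
  refine ((integrable_const 1).add hf).mono'
    ((Real.continuous_rpow_const hθ0).comp_aestronglyMeasurable hf.1) ?_
  filter_upwards [hf0] with x hx
  rw [Real.norm_of_nonneg (Real.rpow_nonneg hx θ)]
  simpa using Real.rpow_le_one_add_rpow hx hθ0 hθ1

lemma integral_rpow_le_rpow_integral [IsProbabilityMeasure μ] {f : α → ℝ} (hf : Integrable f μ)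
    (hf0 : 0 ≤ᵐ[μ] f) {θ : ℝ} (hθ0 : 0 ≤ θ) (hθ1 : θ ≤ 1) :
    ∫ x, f x ^ θ ∂μ ≤ (∫ x, f x ∂μ) ^ θ :=
  (Real.concaveOn_rpow hθ0 hθ1).le_map_integral (Real.continuous_rpow_const hθ0).continuousOn
    isClosed_Ici hf0 hf (hf.rpow_of_le_one hf0 hθ0 hθ1)

variable [IsProbabilityMeasure μ] {t : α → ℝ} {p r : ℝ}

lemma MeasureTheory.Integrable.rpow_of_le (ht : Integrable (fun x => t x ^ r) μ)
    (ht0 : ∀ x, 0 ≤ t x) (hp : 0 ≤ p) (hpr : p ≤ r) (hr : 0 < r) :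
    Integrable (fun x => t x ^ p) μ := by
  refine (ht.rpow_of_le_one (ae_of_all _ fun x => Real.rpow_nonneg (ht0 x) r)
    (div_nonneg hp hr.le) ((div_le_one hr).2 hpr)).congr
    (ae_of_all _ fun x => Real.rpow_rpow_div_self (ht0 x) hr.ne' p)

lemma integrable_const_mul_one_add_rpow (K : ℝ) (ht : Integrable (fun x => t x ^ r) μ)
    (ht0 : ∀ x, 0 ≤ t x) (hp : 0 ≤ p) (hpr : p ≤ r) (hr : 0 < r) :
    Integrable (fun x => K * (1 + t x ^ p)) μ :=
  ((integrable_const 1).add (ht.rpow_of_le ht0 hp hpr hr)).const_mul K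

lemma integral_rpow_le_moment_rpow (ht : Integrable (fun x => t x ^ r) μ)
    (ht0 : ∀ x, 0 ≤ t x) (hp : 0 ≤ p) (hpr : p ≤ r) (hr : 0 < r) :
    ∫ x, t x ^ p ∂μ ≤ ((∫ x, t x ^ r ∂μ) ^ (1 / r)) ^ p := by
  have hjensen := integral_rpow_le_rpow_integral ht
    (ae_of_all _ fun x => Real.rpow_nonneg (ht0 x) r) (div_nonneg hp hr.le) ((div_le_one hr).2 hpr)
  rw [← Real.rpow_mul (integral_nonneg fun x => Real.rpow_nonneg (ht0 x) r), one_div_mul_eq_div]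
  simpa only [Real.rpow_rpow_div_self (ht0 _) hr.ne'] using hjensen

end Moments

section PolynomialGrowth

variable {α : Type*} [MeasurableSpace α] {μ : Measure α} [IsProbabilityMeasure μ]
  {g t : α → ℝ} {C m r : ℝ}

lemma memLp_two_of_abs_le_mul_one_add_rpow (hg : AEStronglyMeasurable g μ)
    (ht : Integrable (fun x => t x ^ r) μ) (ht0 : ∀ x, 0 ≤ t x) (hm : 0 ≤ m) (hmr : 2 * m ≤ r)
    (hr : 0 < r) (hgt : ∀ x, |g x| ≤ C * (1 + t x) ^ m) : MemLp g 2 μ := by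
  have hbound :=
    integrable_const_mul_one_add_rpow (C ^ 2 * 2 ^ (2 * m)) ht ht0 (by positivity) hmr hr
  refine (memLp_two_iff_integrable_sq hg).2 <| hbound.mono' (hg.pow 2) (ae_of_all _ fun x => ?_)
  rw [Real.norm_of_nonneg (sq_nonneg _)]
  exact sq_le_of_abs_le_mul_one_add_rpow (ht0 x) hm (hgt x)

lemma integral_sq_rpow_half_le_of_abs_le_mul_one_add_rpow (ht : Integrable (fun x => t x ^ r) μ)
    (ht0 : ∀ x, 0 ≤ t x) (hC : 0 ≤ C) (hm : 0 ≤ m) (hmr : 2 * m ≤ r) (hr : 0 < r)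
    (hgt : ∀ x, |g x| ≤ C * (1 + t x) ^ m) :
    (∫ x, g x ^ 2 ∂μ) ^ ((1 : ℝ) / 2) ≤ C * 2 ^ m * (1 + ((∫ x, t x ^ r ∂μ) ^ (1 / r)) ^ m) := by
  set W := (∫ x, t x ^ r ∂μ) ^ (1 / r)
  have hW : 0 ≤ W := Real.rpow_nonneg (integral_nonneg fun x => Real.rpow_nonneg (ht0 x) r) _
  have hmoment : ∫ x, t x ^ (2 * m) ∂μ ≤ (W ^ m) ^ 2 := by
    rw [← Real.rpow_two_mul hW]
    exact integral_rpow_le_moment_rpow ht ht0 (by positivity) hmr hr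
  have hbound :=
    integrable_const_mul_one_add_rpow (C ^ 2 * 2 ^ (2 * m)) ht ht0 (by positivity) hmr hr
  have hsq : ∫ x, g x ^ 2 ∂μ ≤ (C * 2 ^ m * (1 + W ^ m)) ^ 2 :=
    calc ∫ x, g x ^ 2 ∂μ ≤ ∫ x, C ^ 2 * 2 ^ (2 * m) * (1 + t x ^ (2 * m)) ∂μ :=
          integral_mono_of_nonneg (ae_of_all _ fun x => sq_nonneg _) hbound
            (ae_of_all _ fun x => sq_le_of_abs_le_mul_one_add_rpow (ht0 x) hm (hgt x))
      _ = C ^ 2 * 2 ^ (2 * m) * (1 + ∫ x, t x ^ (2 * m) ∂μ) := by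
          rw [integral_const_mul, integral_add (integrable_const 1)
            (ht.rpow_of_le ht0 (by positivity) hmr hr)]
          simp
      _ ≤ C ^ 2 * 2 ^ (2 * m) * (1 + (W ^ m) ^ 2) := by gcongr
      _ ≤ (C * 2 ^ m * (1 + W ^ m)) ^ 2 := by
          rw [Real.rpow_two_mul zero_le_two]
          have : 1 + (W ^ m) ^ 2 ≤ (1 + W ^ m) ^ 2 := by nlinarith [Real.rpow_nonneg hW m]
          calc C ^ 2 * (2 ^ m) ^ 2 * (1 + (W ^ m) ^ 2)
              ≤ C ^ 2 * (2 ^ m) ^ 2 * (1 + W ^ m) ^ 2 := by gcongr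
            _ = (C * 2 ^ m * (1 + W ^ m)) ^ 2 := by ring
  rw [← Real.sqrt_eq_rpow]
  exact Real.sqrt_le_iff.2 ⟨by positivity, hsq⟩

end PolynomialGrowth

section Densities

variable {α : Type*} [MeasurableSpace α] {μ : Measure α}

lemma abs_integral_mul_le_L2_mul_L2 {f g : α → ℝ} (hf : MemLp f 2 μ) (hg : MemLp g 2 μ) :
    |∫ x, f x * g x ∂μ|
      ≤ (∫ x, f x ^ 2 ∂μ) ^ ((1 : ℝ) / 2) * (∫ x, g x ^ 2 ∂μ) ^ ((1 : ℝ) / 2) := by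
  have hholder := integral_mul_norm_le_Lp_mul_Lq Real.HolderConjugate.two_two
    (by simpa using hf) (by simpa using hg)
  simp only [Real.norm_eq_abs, Real.rpow_two, sq_abs] at hholder
  refine le_trans ?_ hholder
  simpa only [Real.norm_eq_abs, abs_mul] using norm_integral_le_integral_norm (fun x => f x * g x)

lemma integral_withDensity_ofReal {φ : α → ℝ} (hφm : AEMeasurable φ μ) (hφ0 : 0 ≤ᵐ[μ] φ)
    (g : α → ℝ) :
    ∫ x, g x ∂μ.withDensity (fun x => ENNReal.ofReal (φ x)) = ∫ x, φ x * g x ∂μ := by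
  refine (integral_withDensity_eq_integral_smul₀ hφm.real_toNNReal g).trans
    (integral_congr_ae ?_)
  filter_upwards [hφ0] with x hx
  simp [NNReal.smul_def, Real.coe_toNNReal _ hx]

lemma abs_integral_withDensity_sub_le {φ₁ φ₂ g : α → ℝ} (hφ₁ : MemLp φ₁ 2 μ)
    (hφ₂ : MemLp φ₂ 2 μ) (hφ₁0 : 0 ≤ᵐ[μ] φ₁) (hφ₂0 : 0 ≤ᵐ[μ] φ₂) (hg : MemLp g 2 μ) :
    |∫ x, g x ∂μ.withDensity (fun x => ENNReal.ofReal (φ₁ x))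
        - ∫ x, g x ∂μ.withDensity (fun x => ENNReal.ofReal (φ₂ x))|
      ≤ (∫ x, (φ₁ x - φ₂ x) ^ 2 ∂μ) ^ ((1 : ℝ) / 2) * (∫ x, g x ^ 2 ∂μ) ^ ((1 : ℝ) / 2) := by
  have hφ₁g : Integrable (fun x => φ₁ x * g x) μ := hφ₁.integrable_mul hg
  have hφ₂g : Integrable (fun x => φ₂ x * g x) μ := hφ₂.integrable_mul hg
  rw [integral_withDensity_ofReal hφ₁.1.aemeasurable hφ₁0,
    integral_withDensity_ofReal hφ₂.1.aemeasurable hφ₂0, ← integral_sub hφ₁g hφ₂g]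
  simpa only [Pi.sub_apply, sub_mul] using abs_integral_mul_le_L2_mul_L2 (hφ₁.sub hφ₂) hg

end Densities

theorem stmt9_general
    {d k : ℕ} {m : ℝ} (hm : 0 ≤ m)
    {A : Type*} [MetricSpace A]
    [MeasurableSpace A] (a₀ : A)
    {S : Type*}
    (F : EuclideanSpace ℝ (Fin d) → A → (Fin k → ℝ) → S → EuclideanSpace ℝ (Fin d))
    (LF : ℝ)
    (hF : ∀ y a i z z', ‖F y a z i - F y a z' i‖ ≤ LF * Real.sqrt (∑ j, (z j - z' j) ^ 2))
    (C : ℝ) (hC : 0 ≤ C)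
    (ψ : Fin k → EuclideanSpace ℝ (Fin d) × A → ℝ)
    (hψm : ∀ j, Measurable (ψ j))
    (hψ : ∀ j (y : EuclideanSpace ℝ (Fin d)) (a : A),
      |ψ j (y, a)| ≤ C * (1 + ‖y‖ + dist a a₀) ^ m)
    {r : ℝ} (hr1 : 1 ≤ r) (hr : 2 * m ≤ r) :
    ∃ L : ℝ, 0 ≤ L ∧
      ∀ ρ : Measure (EuclideanSpace ℝ (Fin d) × A), IsProbabilityMeasure ρ →
        Integrable (fun z => (‖z.1‖ + dist z.2 a₀) ^ r) ρ →
        ∀ φ₁ φ₂ : EuclideanSpace ℝ (Fin d) × A → ℝ,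
          Measurable φ₁ → Measurable φ₂ → (∀ z, 0 ≤ φ₁ z) → (∀ z, 0 ≤ φ₂ z) →
          MemLp φ₁ 2 ρ → MemLp φ₂ 2 ρ →
          ∀ ν₁ ν₂ : Measure (EuclideanSpace ℝ (Fin d) × A),
            IsProbabilityMeasure ν₁ → IsProbabilityMeasure ν₂ →
            ν₁ = ρ.withDensity (fun z => ENNReal.ofReal (φ₁ z)) →
            ν₂ = ρ.withDensity (fun z => ENNReal.ofReal (φ₂ z)) →
            ∀ (y : EuclideanSpace ℝ (Fin d)) (a : A) (i : S),
              ‖F y a (fun j => ∫ z, ψ j z ∂ν₁) i - F y a (fun j => ∫ z, ψ j z ∂ν₂) i‖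
                ≤ L * (∫ z, (φ₁ z - φ₂ z) ^ 2 ∂ρ) ^ ((1:ℝ) / 2)
                  * (1 + ((∫ z, (‖z.1‖ + dist z.2 a₀) ^ r ∂ρ) ^ (1 / r)) ^ m) := by
  refine ⟨max LF 0 * √k * (C * 2 ^ m), by positivity, ?_⟩
  intro ρ _ hint φ₁ φ₂ _ _ hφ₁0 hφ₂0 hφ₁ hφ₂ ν₁ ν₂ _ _ rfl rfl y a i
  have ht0 : ∀ z : EuclideanSpace ℝ (Fin d) × A, 0 ≤ ‖z.1‖ + dist z.2 a₀ := fun z => by positivity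
  have hψt : ∀ j z, |ψ j z| ≤ C * (1 + (‖z.1‖ + dist z.2 a₀)) ^ m := fun j z => by
    simpa only [add_assoc] using hψ j z.1 z.2
  set D := (∫ z, (φ₁ z - φ₂ z) ^ 2 ∂ρ) ^ ((1:ℝ) / 2)
  set B := C * 2 ^ m * (1 + ((∫ z, (‖z.1‖ + dist z.2 a₀) ^ r ∂ρ) ^ (1 / r)) ^ m)
  have hr0 : 0 < r := by linarith
  have hψL : ∀ j, MemLp (ψ j) 2 ρ := fun j =>
    memLp_two_of_abs_le_mul_one_add_rpow (hψm j).aestronglyMeasurable hint ht0 hm hr hr0 (hψt j)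
  have hψnorm : ∀ j, (∫ z, ψ j z ^ 2 ∂ρ) ^ ((1:ℝ) / 2) ≤ B := fun j =>
    integral_sq_rpow_half_le_of_abs_le_mul_one_add_rpow hint ht0 hC hm hr hr0 (hψt j)
  have hdiff : ∀ j, |∫ z, ψ j z ∂ρ.withDensity (fun z => ENNReal.ofReal (φ₁ z))
      - ∫ z, ψ j z ∂ρ.withDensity (fun z => ENNReal.ofReal (φ₂ z))| ≤ D * B := fun j =>
    (abs_integral_withDensity_sub_le hφ₁ hφ₂ (ae_of_all _ hφ₁0) (ae_of_all _ hφ₂0) (hψL j)).trans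
      (mul_le_mul_of_nonneg_left (hψnorm j) (by positivity))
  calc _ ≤ LF * √(∑ j, (∫ z, ψ j z ∂ρ.withDensity (fun z => ENNReal.ofReal (φ₁ z))
          - ∫ z, ψ j z ∂ρ.withDensity (fun z => ENNReal.ofReal (φ₂ z))) ^ 2) := hF y a i _ _
    _ ≤ max LF 0 * (√k * (D * B)) := by
      gcongr
      · exact le_max_left _ _
      · simpa using Real.sqrt_sum_sq_le_of_abs_le (by positivity) hdiff
    _ = max LF 0 * √k * (C * 2 ^ m) * D * (1 + _) := by ring

/-- Cylindrical coefficients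
`h(y,ν,a,i) = F(y, a, ∫ψ₁ dν, …, ∫ψ_k dν, i)`, with `F` Lipschitz in its `ℝ^k` variable
(Euclidean norm) and `ψ_j` of polynomial growth of order `m`, satisfy the density-Lipschitz
assumption (A.2) with `χ(z) = z^m`, for `r ≥ 2m`: there is `L ≥ 0` such that for every
`ρ ∈ P_r(ℝ^d × A)` and probability measures `ν₁, ν₂` with densities `φ₁, φ₂ ∈ L²(ρ)`,
`|h(y,ν₁,a,i) − h(y,ν₂,a,i)| ≤ L (∫|φ₁−φ₂|² dρ)^{1/2} (1 + ‖ρ‖_{W_r}^m)`. -/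
theorem stmt9
    {d k : ℕ} (hd : 1 ≤ d) (hk : 1 ≤ k) {m : ℝ} (hm : 0 ≤ m)
    {A : Type*} [MetricSpace A] [TopologicalSpace.SeparableSpace A] [CompleteSpace A]
    [MeasurableSpace A] [BorelSpace A] (a₀ : A)
    {S : Type*} [Finite S]
    (F : EuclideanSpace ℝ (Fin d) → A → (Fin k → ℝ) → S → EuclideanSpace ℝ (Fin d))
    (LF : ℝ)
    (hF : ∀ y a i z z', ‖F y a z i - F y a z' i‖ ≤ LF * Real.sqrt (∑ j, (z j - z' j) ^ 2))
    (C : ℝ) (hC : 0 ≤ C)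
    (ψ : Fin k → EuclideanSpace ℝ (Fin d) × A → ℝ)
    (hψm : ∀ j, Measurable (ψ j))
    (hψ : ∀ j (y : EuclideanSpace ℝ (Fin d)) (a : A),
      |ψ j (y, a)| ≤ C * (1 + ‖y‖ + dist a a₀) ^ m)
    {r : ℝ} (hr1 : 1 ≤ r) (hr : 2 * m ≤ r) :
    ∃ L : ℝ, 0 ≤ L ∧
      ∀ ρ : Measure (EuclideanSpace ℝ (Fin d) × A), IsProbabilityMeasure ρ →
        Integrable (fun z => (‖z.1‖ + dist z.2 a₀) ^ r) ρ →
        ∀ φ₁ φ₂ : EuclideanSpace ℝ (Fin d) × A → ℝ,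
          Measurable φ₁ → Measurable φ₂ → (∀ z, 0 ≤ φ₁ z) → (∀ z, 0 ≤ φ₂ z) →
          MemLp φ₁ 2 ρ → MemLp φ₂ 2 ρ →
          ∀ ν₁ ν₂ : Measure (EuclideanSpace ℝ (Fin d) × A),
            IsProbabilityMeasure ν₁ → IsProbabilityMeasure ν₂ →
            ν₁ = ρ.withDensity (fun z => ENNReal.ofReal (φ₁ z)) →
            ν₂ = ρ.withDensity (fun z => ENNReal.ofReal (φ₂ z)) →
            ∀ (y : EuclideanSpace ℝ (Fin d)) (a : A) (i : S),
              ‖F y a (fun j => ∫ z, ψ j z ∂ν₁) i - F y a (fun j => ∫ z, ψ j z ∂ν₂) i‖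
                ≤ L * (∫ z, (φ₁ z - φ₂ z) ^ 2 ∂ρ) ^ ((1:ℝ) / 2)
                  * (1 + ((∫ z, (‖z.1‖ + dist z.2 a₀) ^ r ∂ρ) ^ (1 / r)) ^ m) :=
  stmt9_general hm a₀ F LF hF C hC ψ hψm hψ hr1 hr
end

section
/- Let (E, d) be a Polish metric space with base point z_0, let v ≥ 0, C ≥ 0 and q ≥ v + 1, and let ψ : E → ℝ satisfy the local Lipschitz condition |ψ(z) − ψ(z')| ≤ C · d(z, z') · (1 + d(z, z_0) + d(z', z_0))^v for all z, z' ∈ E. Then there exists a constant C', depending only on C, v and q, such that for all ν, ν' ∈ P_q(E): |∫ψ dν − ∫ψ dν'| ≤ C' · W_q(ν, ν') · (1 + ‖ν‖_{W_q}^v + ‖ν'‖_{W_q}^v). -/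
open MeasureTheory ENNReal

/-- The `q`-th power of the `q`-Wasserstein distance on a metric measurable space `E`,
defined as the infimum over couplings of the integral cost `d(z,z')^q`. -/
noncomputable def WqPow {E : Type*} [MetricSpace E] [MeasurableSpace E] (q : ℝ)
    (μ ν : Measure E) : ℝ≥0∞ :=
  ⨅ γ ∈ {γ : Measure (E × E) | γ.map Prod.fst = μ ∧ γ.map Prod.snd = ν},
    ∫⁻ z, ENNReal.ofReal (dist z.1 z.2 ^ q) ∂γ

/-! For a coupling `γ` of `ν` and `ν'` we have `∫ ψ dν - ∫ ψ dν' = ∫ (ψ x - ψ y) dγ(x, y)`.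
The weighted Lipschitz bound and Hölder's inequality (exponents `q`, `q / v`, and the rest on the
constant `1`, which is possible because `v + 1 ≤ q`) bound this by
`C ‖d(x, y)‖_{L^q(γ)} ‖1 + d(x, z₀) + d(y, z₀)‖_{L^q(γ)} ^ v`. By Minkowski's inequality the
second norm is at most `1 + ‖ν‖_{W_q} + ‖ν'‖_{W_q}` whatever `γ` is, so taking the infimum over
couplings turns the first factor into `W_q(ν, ν')`; finally
`(1 + a + b) ^ v ≤ 3 ^ v (1 + a ^ v + b ^ v)`. -/

theorem Real.rpow_add_add_le_mul_rpow_add_rpow_add_rpow {x y z v : ℝ} (hx : 0 ≤ x) (hy : 0 ≤ y)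
    (hz : 0 ≤ z) (hv : 0 ≤ v) : (x + y + z) ^ v ≤ 3 ^ v * (x ^ v + y ^ v + z ^ v) := by
  have hsum : x + y + z ≤ 3 * max x (max y z) := by
    linarith [le_max_left x (max y z), le_max_right x (max y z), le_max_left y z,
      le_max_right y z]
  have hmax : max x (max y z) ^ v ≤ x ^ v + y ^ v + z ^ v := by
    have := Real.rpow_nonneg hx v
    have := Real.rpow_nonneg hy v
    have := Real.rpow_nonneg hz v
    rcases max_choice x (max y z) with h | h <;> rw [h]
    · linarith
    rcases max_choice y z with h' | h' <;> rw [h'] <;> linarith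
  calc (x + y + z) ^ v ≤ (3 * max x (max y z)) ^ v := by gcongr
    _ = 3 ^ v * max x (max y z) ^ v := Real.mul_rpow (by norm_num) (hx.trans (le_max_left _ _))
    _ ≤ 3 ^ v * (x ^ v + y ^ v + z ^ v) := by gcongr

namespace MeasureTheory

variable {α β F : Type*} [MeasurableSpace α] [MeasurableSpace β] [NormedAddCommGroup F]

theorem lintegral_mul_rpow_le_eLpNorm' {μ : Measure α} [IsProbabilityMeasure μ]
    {f g : α → ℝ≥0∞} (hf : AEMeasurable f μ) (hg : AEMeasurable g μ) {v q : ℝ} (hv : 0 ≤ v)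
    (hq : v + 1 ≤ q) : ∫⁻ a, f a * g a ^ v ∂μ ≤ eLpNorm' f q μ * eLpNorm' g q μ ^ v := by
  have hq₀ : 0 < q := by linarith
  have holder := lintegral_prod_norm_pow_le (μ := μ) Finset.univ
    (f := ![fun a => f a ^ q, fun a => g a ^ q, fun _ => 1]) (p := ![1 / q, v / q, 1 - (1 + v) / q])
    (by intro i _; fin_cases i
        exacts [hf.pow_const q, hg.pow_const q, aemeasurable_const])
    (by simp only [Fin.sum_univ_three, Fin.isValue, Matrix.cons_val_zero, Matrix.cons_val_one,
          Matrix.cons_val_two, Matrix.head_cons, Matrix.tail_cons]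
        field_simp; ring)
    (by intro i _; fin_cases i
        · exact div_nonneg zero_le_one hq₀.le
        · exact div_nonneg hv hq₀.le
        · change 0 ≤ 1 - (1 + v) / q
          rw [sub_nonneg, div_le_one hq₀]; linarith)
  simp only [Fin.prod_univ_three, Matrix.cons_val_zero, Matrix.cons_val_one, Matrix.cons_val_two,
    Matrix.head_cons, Matrix.tail_cons, one_rpow, mul_one, lintegral_one, measure_univ] at holder
  simp only [eLpNorm'_eq_lintegral_enorm, enorm_eq_self, ← rpow_mul]
  convert holder using 3 with a
  · rw [← rpow_mul, ← rpow_mul, mul_one_div_cancel hq₀.ne', rpow_one, mul_div_cancel₀ _ hq₀.ne']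
  · rw [one_div_mul_eq_div]

theorem eLpNorm'_map {μ : Measure α} {g : α → β} (hg : AEMeasurable g μ) {f : β → F}
    (hf : AEStronglyMeasurable f (μ.map g)) (q : ℝ) :
    eLpNorm' f q (μ.map g) = eLpNorm' (f ∘ g) q μ := by
  simp only [eLpNorm'_eq_lintegral_enorm, lintegral_map' (hf.enorm.pow_const q) hg,
    Function.comp_apply]

theorem eLpNorm'_eq_ofReal_integral_rpow {μ : Measure α} {f : α → ℝ} (hf : 0 ≤ f) {q : ℝ}
    (hq : 0 ≤ q) (hfq : Integrable (fun a => f a ^ q) μ) :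
    eLpNorm' f q μ = ENNReal.ofReal ((∫ a, f a ^ q ∂μ) ^ (1 / q)) := by
  rw [eLpNorm'_eq_lintegral_enorm, ← ENNReal.ofReal_rpow_of_nonneg
    (integral_nonneg fun a => Real.rpow_nonneg (hf a) q) (by positivity),
    ofReal_integral_eq_lintegral_ofReal hfq (.of_forall fun a => Real.rpow_nonneg (hf a) q)]
  congr 1
  refine lintegral_congr fun a => ?_
  rw [Real.enorm_of_nonneg (hf a), ENNReal.ofReal_rpow_of_nonneg (hf a) hq]

def couplings (μ : Measure α) (ν : Measure β) : Set (Measure (α × β)) :=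
  {γ | γ.map Prod.fst = μ ∧ γ.map Prod.snd = ν}

variable {μ : Measure α} {ν : Measure β} {γ : Measure (α × β)}

theorem prod_mem_couplings [IsProbabilityMeasure μ] [IsProbabilityMeasure ν] :
    μ.prod ν ∈ couplings μ ν :=
  ⟨by simp, by simp⟩

theorem isProbabilityMeasure_of_mem_couplings [IsProbabilityMeasure μ] (hγ : γ ∈ couplings μ ν) :
    IsProbabilityMeasure γ :=
  (Measure.isProbabilityMeasure_map_iff measurable_fst.aemeasurable).1 (hγ.1 ▸ inferInstance)

theorem eLpNorm'_comp_fst_of_mem_couplings (hγ : γ ∈ couplings μ ν) {f : α → F}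
    (hf : AEStronglyMeasurable f μ) (q : ℝ) :
    eLpNorm' (fun p => f p.1) q γ = eLpNorm' f q μ := by
  rw [← hγ.1] at hf ⊢
  exact (eLpNorm'_map measurable_fst.aemeasurable hf q).symm

theorem eLpNorm'_comp_snd_of_mem_couplings (hγ : γ ∈ couplings μ ν) {f : β → F}
    (hf : AEStronglyMeasurable f ν) (q : ℝ) :
    eLpNorm' (fun p => f p.2) q γ = eLpNorm' f q ν := by
  rw [← hγ.2] at hf ⊢
  exact (eLpNorm'_map measurable_snd.aemeasurable hf q).symm

theorem integral_comp_fst_of_mem_couplings [NormedSpace ℝ F] (hγ : γ ∈ couplings μ ν) {f : α → F}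
    (hf : AEStronglyMeasurable f μ) : ∫ p, f p.1 ∂γ = ∫ a, f a ∂μ := by
  rw [← hγ.1] at hf ⊢
  exact (integral_map measurable_fst.aemeasurable hf).symm

theorem integral_comp_snd_of_mem_couplings [NormedSpace ℝ F] (hγ : γ ∈ couplings μ ν) {f : β → F}
    (hf : AEStronglyMeasurable f ν) : ∫ p, f p.2 ∂γ = ∫ b, f b ∂ν := by
  rw [← hγ.2] at hf ⊢
  exact (integral_map measurable_snd.aemeasurable hf).symm

section PseudoMetric

variable {E : Type*} [PseudoMetricSpace E] [MeasurableSpace E] [OpensMeasurableSpace E]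
  {μ ν : Measure E} {γ : Measure (E × E)} {q : ℝ}

theorem eLpNorm'_dist_le_of_mem_couplings (hγ : γ ∈ couplings μ ν) (hq : 1 ≤ q) (z₀ : E) :
    eLpNorm' (fun p : E × E => dist p.1 p.2) q γ
      ≤ eLpNorm' (dist · z₀) q μ + eLpNorm' (dist · z₀) q ν := by
  have hd : StronglyMeasurable (dist · z₀) :=
    (continuous_id.dist continuous_const).stronglyMeasurable
  calc eLpNorm' (fun p : E × E => dist p.1 p.2) q γ
      ≤ eLpNorm' ((fun p : E × E => dist p.1 z₀) + fun p => dist p.2 z₀) q γ := by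
        refine eLpNorm'_mono_ae (by linarith) (.of_forall fun p => ?_)
        simp only [Pi.add_apply, Real.norm_of_nonneg dist_nonneg,
          Real.norm_of_nonneg (add_nonneg dist_nonneg dist_nonneg)]
        exact dist_triangle_right _ _ _
    _ ≤ eLpNorm' (fun p : E × E => dist p.1 z₀) q γ
          + eLpNorm' (fun p : E × E => dist p.2 z₀) q γ :=
        eLpNorm'_add_le (hd.comp_measurable measurable_fst).aestronglyMeasurable
          (hd.comp_measurable measurable_snd).aestronglyMeasurable hq
    _ = _ := by
        rw [eLpNorm'_comp_fst_of_mem_couplings hγ hd.aestronglyMeasurable,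
          eLpNorm'_comp_snd_of_mem_couplings hγ hd.aestronglyMeasurable]

theorem eLpNorm'_one_add_dist_add_dist_le_of_mem_couplings [IsProbabilityMeasure μ]
    (hγ : γ ∈ couplings μ ν) (hq : 1 ≤ q) (z₀ : E) :
    eLpNorm' (fun p : E × E => 1 + dist p.1 z₀ + dist p.2 z₀) q γ
      ≤ 1 + eLpNorm' (dist · z₀) q μ + eLpNorm' (dist · z₀) q ν := by
  have := isProbabilityMeasure_of_mem_couplings hγ
  have hd : StronglyMeasurable (dist · z₀) :=
    (continuous_id.dist continuous_const).stronglyMeasurable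
  have hd₁ : AEStronglyMeasurable (fun p : E × E => dist p.1 z₀) γ :=
    (hd.comp_measurable measurable_fst).aestronglyMeasurable
  have hd₂ : AEStronglyMeasurable (fun p : E × E => dist p.2 z₀) γ :=
    (hd.comp_measurable measurable_snd).aestronglyMeasurable
  calc eLpNorm' (fun p : E × E => 1 + dist p.1 z₀ + dist p.2 z₀) q γ
      ≤ eLpNorm' (fun p : E × E => 1 + dist p.1 z₀) q γ
          + eLpNorm' (fun p : E × E => dist p.2 z₀) q γ :=
        eLpNorm'_add_le (f := fun p : E × E => 1 + dist p.1 z₀)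
          (aestronglyMeasurable_const.add hd₁) hd₂ hq
    _ ≤ eLpNorm' (fun _ : E × E => (1 : ℝ)) q γ + eLpNorm' (fun p : E × E => dist p.1 z₀) q γ
          + eLpNorm' (fun p : E × E => dist p.2 z₀) q γ := by
        gcongr
        exact eLpNorm'_add_le (f := fun _ : E × E => (1 : ℝ)) aestronglyMeasurable_const hd₁ hq
    _ = _ := by
        rw [eLpNorm'_const_of_isProbabilityMeasure _ (by linarith), enorm_one,
          eLpNorm'_comp_fst_of_mem_couplings hγ hd.aestronglyMeasurable,
          eLpNorm'_comp_snd_of_mem_couplings hγ hd.aestronglyMeasurable]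

end PseudoMetric

section Metric

variable {E : Type*} [MetricSpace E] [MeasurableSpace E] {μ ν : Measure E} {q : ℝ}

theorem WqPow_rpow_eq_iInf (hq : 0 < q) :
    WqPow q μ ν ^ (1 / q)
      = ⨅ γ ∈ couplings μ ν, eLpNorm' (fun p : E × E => dist p.1 p.2) q γ := by
  let e := ENNReal.orderIsoRpow (1 / q) (one_div_pos.2 hq)
  change e (WqPow q μ ν) = _
  simp only [WqPow, couplings, e.map_iInf, e, ENNReal.orderIsoRpow_apply,
    eLpNorm'_eq_lintegral_enorm]
  refine iInf_congr fun γ => iInf_congr fun _ =>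
    congrArg (· ^ (1 / q)) (lintegral_congr fun p => ?_)
  rw [Real.enorm_of_nonneg dist_nonneg, ENNReal.ofReal_rpow_of_nonneg dist_nonneg hq.le]

theorem le_mul_WqPow_rpow (hq : 0 < q) (hne : (couplings μ ν).Nonempty) {a c : ℝ≥0∞}
    (hc : c ≠ ⊤) (h : ∀ γ ∈ couplings μ ν, a ≤ c * eLpNorm' (fun p : E × E => dist p.1 p.2) q γ) :
    a ≤ c * WqPow q μ ν ^ (1 / q) := by
  obtain ⟨γ₀, hγ₀⟩ := hne
  rcases eq_or_ne c 0 with rfl | hc₀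
  · simpa using h γ₀ hγ₀
  simp only [WqPow_rpow_eq_iInf hq, ENNReal.mul_iInf_of_ne hc₀ hc]
  exact le_iInf₂ h

theorem WqPow_rpow_le [OpensMeasurableSpace E] [IsProbabilityMeasure μ] [IsProbabilityMeasure ν]
    (hq : 1 ≤ q) (z₀ : E) :
    WqPow q μ ν ^ (1 / q) ≤ eLpNorm' (dist · z₀) q μ + eLpNorm' (dist · z₀) q ν := by
  rw [WqPow_rpow_eq_iInf (by linarith)]
  exact (iInf₂_le _ prod_mem_couplings).trans
    (eLpNorm'_dist_le_of_mem_couplings prod_mem_couplings hq z₀)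

end Metric

end MeasureTheory

section PolyLipschitz

variable {E : Type*} [PseudoMetricSpace E]

def PolyLipschitzWith (C v : ℝ) (z₀ : E) (ψ : E → ℝ) : Prop :=
  ∀ z z', |ψ z - ψ z'| ≤ C * dist z z' * (1 + dist z z₀ + dist z' z₀) ^ v

variable {C v q : ℝ} {z₀ : E} {ψ : E → ℝ}

namespace PolyLipschitzWith

theorem continuous (hψ : PolyLipschitzWith C v z₀ ψ) : Continuous ψ := by
  refine continuous_iff_continuousAt.2 fun z => tendsto_iff_dist_tendsto_zero.2 ?_
  have hbound : Filter.Tendsto (fun z' => C * dist z' z * (1 + dist z' z₀ + dist z z₀) ^ v)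
      (nhds z) (nhds (C * dist z z * (1 + dist z z₀ + dist z z₀) ^ v)) := by
    have hw : Continuous fun z' => (1 + dist z' z₀ + dist z z₀) ^ v :=
      ((continuous_const.add (continuous_id.dist continuous_const)).add continuous_const).rpow_const
        fun _ => Or.inl (by dsimp; positivity)
    exact ((continuous_const.mul (continuous_id.dist continuous_const)).mul hw).tendsto z
  rw [dist_self, mul_zero, zero_mul] at hbound
  exact squeeze_zero (fun _ => dist_nonneg) (fun z' => hψ z' z) hbound

theorem abs_le (hψ : PolyLipschitzWith C v z₀ ψ) (hC : 0 ≤ C) (hv : 0 ≤ v) (hq : v + 1 ≤ q)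
    (z : E) : |ψ z| ≤ |ψ z₀| + C * 3 ^ q * (1 + dist z z₀ ^ q) := by
  set d := dist z z₀
  have hd : 0 ≤ d := dist_nonneg
  have hq₀ : 0 < q := by linarith
  have hweight : d * (1 + d + 0) ^ v ≤ 3 ^ q * (1 + d ^ q) :=
    calc d * (1 + d + 0) ^ v ≤ (1 + d + 0) ^ (v + 1) := by
          rw [Real.rpow_add_one (by positivity), mul_comm]; gcongr; linarith
      _ ≤ (1 + d + 0) ^ q := Real.rpow_le_rpow_of_exponent_le (by linarith) hq
      _ ≤ 3 ^ q * (1 ^ q + d ^ q + 0 ^ q) :=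
          Real.rpow_add_add_le_mul_rpow_add_rpow_add_rpow zero_le_one hd le_rfl hq₀.le
      _ = 3 ^ q * (1 + d ^ q) := by rw [Real.one_rpow, Real.zero_rpow hq₀.ne', add_zero]
  have hlip := hψ z z₀
  rw [dist_self] at hlip
  calc |ψ z| ≤ |ψ z₀| + |ψ z - ψ z₀| := by linarith [abs_sub_abs_le_abs_sub (ψ z) (ψ z₀)]
    _ ≤ |ψ z₀| + C * (d * (1 + d + 0) ^ v) := by rw [← mul_assoc]; gcongr
    _ ≤ |ψ z₀| + C * 3 ^ q * (1 + d ^ q) := by rw [mul_assoc]; gcongr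

variable [MeasurableSpace E] [OpensMeasurableSpace E]

theorem integrable (hψ : PolyLipschitzWith C v z₀ ψ) (hC : 0 ≤ C) (hv : 0 ≤ v) (hq : v + 1 ≤ q)
    {μ : Measure E} [IsFiniteMeasure μ] (hμ : Integrable (fun z => dist z z₀ ^ q) μ) :
    Integrable ψ μ :=
  Integrable.mono' ((integrable_const _).add (((integrable_const 1).add hμ).const_mul _))
    hψ.continuous.aestronglyMeasurable (.of_forall fun z => hψ.abs_le hC hv hq z)

variable [SecondCountableTopology E]

theorem lintegral_enorm_sub_le (hψ : PolyLipschitzWith C v z₀ ψ) (hC : 0 ≤ C) (hv : 0 ≤ v)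
    (hq : v + 1 ≤ q) (γ : Measure (E × E)) [IsProbabilityMeasure γ] :
    ∫⁻ p, ‖ψ p.1 - ψ p.2‖ₑ ∂γ ≤ ENNReal.ofReal C * (eLpNorm' (fun p : E × E => dist p.1 p.2) q γ
      * eLpNorm' (fun p : E × E => 1 + dist p.1 z₀ + dist p.2 z₀) q γ ^ v) := by
  have hw : Continuous fun p : E × E => 1 + dist p.1 z₀ + dist p.2 z₀ := by fun_prop
  have hw₀ (p : E × E) : 0 ≤ 1 + dist p.1 z₀ + dist p.2 z₀ := by positivity
  calc ∫⁻ p, ‖ψ p.1 - ψ p.2‖ₑ ∂γ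
      ≤ ∫⁻ p, ENNReal.ofReal C
          * (‖dist p.1 p.2‖ₑ * ‖1 + dist p.1 z₀ + dist p.2 z₀‖ₑ ^ v) ∂γ := by
        refine lintegral_mono fun p => ?_
        rw [Real.enorm_eq_ofReal_abs, Real.enorm_of_nonneg dist_nonneg,
          Real.enorm_of_nonneg (hw₀ p), ENNReal.ofReal_rpow_of_nonneg (hw₀ p) hv,
          ← ENNReal.ofReal_mul dist_nonneg, ← ENNReal.ofReal_mul hC, ← mul_assoc]
        exact ENNReal.ofReal_le_ofReal (hψ p.1 p.2)
    _ = ENNReal.ofReal C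
          * ∫⁻ p, ‖dist p.1 p.2‖ₑ * ‖1 + dist p.1 z₀ + dist p.2 z₀‖ₑ ^ v ∂γ :=
        lintegral_const_mul' _ _ ENNReal.ofReal_ne_top
    _ ≤ _ := by
        rw [← eLpNorm'_enorm (f := fun p : E × E => dist p.1 p.2),
          ← eLpNorm'_enorm (f := fun p : E × E => 1 + dist p.1 z₀ + dist p.2 z₀)]
        gcongr
        exact lintegral_mul_rpow_le_eLpNorm' continuous_dist.enorm.measurable.aemeasurable
          hw.enorm.measurable.aemeasurable hv hq

theorem enorm_integral_sub_le_of_mem_couplings (hψ : PolyLipschitzWith C v z₀ ψ) (hC : 0 ≤ C)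
    (hv : 0 ≤ v) (hq : v + 1 ≤ q) {ν ν' : Measure E} [IsProbabilityMeasure ν]
    (hψν : Integrable ψ ν) (hψν' : Integrable ψ ν') {γ : Measure (E × E)}
    (hγ : γ ∈ couplings ν ν') :
    ‖(∫ z, ψ z ∂ν) - ∫ z, ψ z ∂ν'‖ₑ ≤ ENNReal.ofReal C
      * (eLpNorm' (fun p : E × E => dist p.1 p.2) q γ
        * (1 + eLpNorm' (dist · z₀) q ν + eLpNorm' (dist · z₀) q ν') ^ v) := by
  have := isProbabilityMeasure_of_mem_couplings hγ
  have hψ₁ : Integrable (fun p : E × E => ψ p.1) γ := (hγ.1 ▸ hψν).comp_measurable measurable_fst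
  have hψ₂ : Integrable (fun p : E × E => ψ p.2) γ := (hγ.2 ▸ hψν').comp_measurable measurable_snd
  calc ‖(∫ z, ψ z ∂ν) - ∫ z, ψ z ∂ν'‖ₑ = ‖∫ p, (ψ p.1 - ψ p.2) ∂γ‖ₑ := by
        rw [integral_sub hψ₁ hψ₂, integral_comp_fst_of_mem_couplings hγ hψν.1,
          integral_comp_snd_of_mem_couplings hγ hψν'.1]
    _ ≤ ∫⁻ p, ‖ψ p.1 - ψ p.2‖ₑ ∂γ := enorm_integral_le_lintegral_enorm _
    _ ≤ _ := by
        grw [hψ.lintegral_enorm_sub_le hC hv hq γ,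
          eLpNorm'_one_add_dist_add_dist_le_of_mem_couplings hγ (by linarith) z₀]

end PolyLipschitzWith

end PolyLipschitz

theorem PolyLipschitzWith.abs_integral_sub_le {E : Type*} [MetricSpace E]
    [SecondCountableTopology E] [MeasurableSpace E] [OpensMeasurableSpace E] {C v q : ℝ} {z₀ : E}
    {ψ : E → ℝ} (hψ : PolyLipschitzWith C v z₀ ψ) (hC : 0 ≤ C) (hv : 0 ≤ v) (hq : v + 1 ≤ q)
    {ν ν' : Measure E} [IsProbabilityMeasure ν] [IsProbabilityMeasure ν']
    (hν : Integrable (fun z => dist z z₀ ^ q) ν) (hν' : Integrable (fun z => dist z z₀ ^ q) ν') :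
    |(∫ z, ψ z ∂ν) - ∫ z, ψ z ∂ν'|
      ≤ C * (WqPow q ν ν' ^ (1 / q)).toReal
        * (1 + (∫ z, dist z z₀ ^ q ∂ν) ^ (1 / q) + (∫ z, dist z z₀ ^ q ∂ν') ^ (1 / q)) ^ v := by
  have hq₀ : 0 < q := by linarith
  set m := (∫ z, dist z z₀ ^ q ∂ν) ^ (1 / q)
  set m' := (∫ z, dist z z₀ ^ q ∂ν') ^ (1 / q)
  have hm : eLpNorm' (dist · z₀) q ν = ENNReal.ofReal m :=
    eLpNorm'_eq_ofReal_integral_rpow (fun _ => dist_nonneg) hq₀.le hν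
  have hm' : eLpNorm' (dist · z₀) q ν' = ENNReal.ofReal m' :=
    eLpNorm'_eq_ofReal_integral_rpow (fun _ => dist_nonneg) hq₀.le hν'
  have hm₀ : 0 ≤ m := by positivity
  have hm₀' : 0 ≤ m' := by positivity
  have hK : ENNReal.ofReal C * (1 + eLpNorm' (dist · z₀) q ν + eLpNorm' (dist · z₀) q ν') ^ v
      = ENNReal.ofReal (C * (1 + m + m') ^ v) := by
    rw [hm, hm', ← ENNReal.ofReal_one, ← ENNReal.ofReal_add zero_le_one hm₀,
      ← ENNReal.ofReal_add (by positivity) hm₀', ENNReal.ofReal_rpow_of_nonneg (by positivity) hv,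
      ENNReal.ofReal_mul hC]
  have hW := le_mul_WqPow_rpow (c := ENNReal.ofReal (C * (1 + m + m') ^ v)) hq₀
    ⟨_, prod_mem_couplings⟩ ENNReal.ofReal_ne_top fun γ hγ =>
      (hψ.enorm_integral_sub_le_of_mem_couplings hC hv hq (hψ.integrable hC hv hq hν)
        (hψ.integrable hC hv hq hν') hγ).trans_eq (by rw [← hK]; ring)
  have hW_ne_top : WqPow q ν ν' ^ (1 / q) ≠ ⊤ :=
    ((WqPow_rpow_le (by linarith) z₀).trans_lt (by simp [hm, hm'])).ne
  rw [Real.enorm_eq_ofReal_abs,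
    ENNReal.ofReal_le_iff_le_toReal (ENNReal.mul_ne_top ENNReal.ofReal_ne_top hW_ne_top),
    ENNReal.toReal_mul, ENNReal.toReal_ofReal (by positivity)] at hW
  exact hW.trans_eq (by ring)

theorem stmt10_general
    {E : Type*} [MetricSpace E] [TopologicalSpace.SeparableSpace E]
    [MeasurableSpace E] [BorelSpace E] (z₀ : E)
    {v C q : ℝ} (hv : 0 ≤ v) (hC : 0 ≤ C) (hq : v + 1 ≤ q)
    (ψ : E → ℝ)
    (hψ : ∀ z z', |ψ z - ψ z'| ≤ C * dist z z' * (1 + dist z z₀ + dist z' z₀) ^ v) :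
    ∃ C' : ℝ, ∀ ν ν' : Measure E, IsProbabilityMeasure ν → IsProbabilityMeasure ν' →
      Integrable (fun z => dist z z₀ ^ q) ν → Integrable (fun z => dist z z₀ ^ q) ν' →
      |(∫ z, ψ z ∂ν) - ∫ z, ψ z ∂ν'|
        ≤ C' * (WqPow q ν ν' ^ (1 / q)).toReal
          * (1 + ((∫ z, dist z z₀ ^ q ∂ν) ^ (1 / q)) ^ v
             + ((∫ z, dist z z₀ ^ q ∂ν') ^ (1 / q)) ^ v) := by
  refine ⟨C * 3 ^ v, fun ν ν' _ _ hν hν' => ?_⟩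
  have hm (μ : Measure E) : 0 ≤ (∫ z, dist z z₀ ^ q ∂μ) ^ (1 / q) := by positivity
  calc |(∫ z, ψ z ∂ν) - ∫ z, ψ z ∂ν'|
      ≤ C * (WqPow q ν ν' ^ (1 / q)).toReal
        * (1 + (∫ z, dist z z₀ ^ q ∂ν) ^ (1 / q) + (∫ z, dist z z₀ ^ q ∂ν') ^ (1 / q)) ^ v :=
        PolyLipschitzWith.abs_integral_sub_le hψ hC hv hq hν hν'
    _ ≤ C * (WqPow q ν ν' ^ (1 / q)).toReal
        * (3 ^ v * (1 ^ v + ((∫ z, dist z z₀ ^ q ∂ν) ^ (1 / q)) ^ v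
          + ((∫ z, dist z z₀ ^ q ∂ν') ^ (1 / q)) ^ v)) := by
        gcongr
        exact Real.rpow_add_add_le_mul_rpow_add_rpow_add_rpow zero_le_one (hm ν) (hm ν') hv
    _ = _ := by rw [Real.one_rpow]; ring

/-- If `ψ : E → ℝ` satisfies the local Lipschitz bound
`|ψ(z) − ψ(z')| ≤ C d(z,z') (1 + d(z,z₀) + d(z',z₀))^v` with `q ≥ v + 1`, then there is a
constant `C'` (depending only on `C, v, q`) such that for all `ν, ν' ∈ P_q(E)`:
`|∫ψ dν − ∫ψ dν'| ≤ C' W_q(ν,ν') (1 + ‖ν‖_{W_q}^v + ‖ν'‖_{W_q}^v)`. -/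
theorem stmt10
    {E : Type*} [MetricSpace E] [TopologicalSpace.SeparableSpace E] [CompleteSpace E]
    [MeasurableSpace E] [BorelSpace E] (z₀ : E)
    {v C q : ℝ} (hv : 0 ≤ v) (hC : 0 ≤ C) (hq : v + 1 ≤ q)
    (ψ : E → ℝ)
    (hψ : ∀ z z', |ψ z - ψ z'| ≤ C * dist z z' * (1 + dist z z₀ + dist z' z₀) ^ v) :
    ∃ C' : ℝ, ∀ ν ν' : Measure E, IsProbabilityMeasure ν → IsProbabilityMeasure ν' →
      Integrable (fun z => dist z z₀ ^ q) ν → Integrable (fun z => dist z z₀ ^ q) ν' →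
      |(∫ z, ψ z ∂ν) - ∫ z, ψ z ∂ν'|
        ≤ C' * (WqPow q ν ν' ^ (1 / q)).toReal
          * (1 + ((∫ z, dist z z₀ ^ q ∂ν) ^ (1 / q)) ^ v
             + ((∫ z, dist z z₀ ^ q ∂ν') ^ (1 / q)) ^ v) :=
  stmt10_general z₀ hv hC hq ψ hψ
end
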